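/- Unbiasedness of the RS+FD[GRR] estimator (Theorem 'est_grr'): let d ≥ 1 and c ≥ 2 be integers, p, q ∈ [0,1] with p ≠ q and q = (1−p)/(c−1), and let n be a positive integer. Suppose that among the n users exactly f·n hold the value v (where 0 ≤ f ≤ 1 and f·n is an integer) and each user independently reports v (for the attribute under estimation) with probability p/d + (d−1)/(d·c) if it holds v and with probability q/d + (d−1)/(d·c) otherwise. Then the estimator f̂ = (N·d·c − n·(d−1+q·c))/(n·c·(p−q)), where N is the number of users whose report equals v, satisfies E[f̂] = f. -/

import Mathlib

open MeasureTheory ProbabilityTheory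

/-! By linearity of expectation, `E[N] = n q' + f n (p' - q')`, where `p'` and `q'` are the
probabilities of reporting `v` for holders and non-holders; the estimator is the affine map
inverting this. -/

lemma ite_one_zero_eq_indicator {Ω : Type*} (X : Ω → Bool) :
    (fun ω => if X ω then (1 : ℝ) else 0) = {ω | X ω = true}.indicator 1 := by
  ext ω
  simp only [Set.indicator_apply, Set.mem_ofPred_eq, Pi.one_apply]

section BoolCount

variable {Ω : Type*} [MeasurableSpace Ω] {μ : Measure Ω}

lemma integral_ite_one_zero {X : Ω → Bool} (hX : Measurable X) :
    ∫ ω, (if X ω then (1 : ℝ) else 0) ∂μ = μ.real {ω | X ω = true} := by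
  rw [ite_one_zero_eq_indicator]
  exact integral_indicator_one (hX (measurableSet_singleton true))

lemma integrable_ite_one_zero [IsFiniteMeasure μ] {X : Ω → Bool} (hX : Measurable X) :
    Integrable (fun ω => if X ω then (1 : ℝ) else 0) μ := by
  rw [ite_one_zero_eq_indicator]
  exact (integrable_const 1).indicator (hX (measurableSet_singleton true))

variable {ι : Type*} [Fintype ι] [IsFiniteMeasure μ] {X : ι → Ω → Bool}

lemma integrable_sum_ite_one_zero (hX : ∀ i, Measurable (X i)) :
    Integrable (fun ω => ∑ i, if X i ω then (1 : ℝ) else 0) μ :=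
  integrable_finsetSum _ fun i _ => integrable_ite_one_zero (hX i)

lemma integral_sum_ite_one_zero (hX : ∀ i, Measurable (X i)) :
    ∫ ω, (∑ i, if X i ω then (1 : ℝ) else 0) ∂μ
      = ∑ i, μ.real {ω | X i ω = true} := by
  rw [integral_finsetSum _ fun i _ => integrable_ite_one_zero (hX i)]
  exact Finset.sum_congr rfl fun i _ => integral_ite_one_zero (hX i)

end BoolCount

lemma Fintype.sum_ite_eq_card_mul_add {ι R : Type*} [Fintype ι] [CommRing R]
    (h : ι → Bool) (a b : R) :
    ∑ i, (if h i then a else b)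
      = Fintype.card ι * b + (∑ i, if h i then (1 : R) else 0) * (a - b) := by
  rw [Finset.sum_mul, ← nsmul_eq_mul, ← Finset.card_univ, ← Finset.sum_const,
    ← Finset.sum_add_distrib]
  exact Finset.sum_congr rfl fun i _ => by cases h i <;> simp

lemma rsfd_estimator_of_mean {d c n p q f : ℝ} (hd : d ≠ 0) (hc : c ≠ 0) (hn : n ≠ 0)
    (hpq : p ≠ q) :
    ((n * (q / d + (d - 1) / (d * c)) + f * n * (p / d - q / d)) * d * c
      - n * (d - 1 + q * c)) / (n * c * (p - q)) = f := by
  have hpq' : p - q ≠ 0 := sub_ne_zero.2 hpq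
  field_simp
  ring

theorem est_grr_general
    {Ω : Type*} [MeasureSpace Ω] [IsProbabilityMeasure (ℙ : Measure Ω)]
    (d c : ℕ) (hd : 1 ≤ d) (hc : 2 ≤ c)
    (p q : ℝ) (hp : 0 ≤ p ∧ p ≤ 1) (hq : 0 ≤ q ∧ q ≤ 1) (hpq : p ≠ q)
    (n : ℕ) (hn : 0 < n)
    (f : ℝ)
    (holds : Fin n → Bool)
    (hcount : (∑ i, if holds i then (1 : ℝ) else 0) = f * n)
    (report : Fin n → Ω → Bool)
    (hmeas : ∀ i, Measurable (report i))
    (hps : ∀ i, holds i = true →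
      ℙ {ω | report i ω = true}
        = ENNReal.ofReal (p / (d : ℝ) + ((d : ℝ) - 1) / ((d : ℝ) * (c : ℝ))))
    (hqs : ∀ i, holds i = false →
      ℙ {ω | report i ω = true}
        = ENNReal.ofReal (q / (d : ℝ) + ((d : ℝ) - 1) / ((d : ℝ) * (c : ℝ)))) :
    ∫ ω, ((∑ i, if report i ω then (1 : ℝ) else 0) * (d : ℝ) * (c : ℝ)
        - (n : ℝ) * ((d : ℝ) - 1 + q * (c : ℝ)))
        / ((n : ℝ) * (c : ℝ) * (p - q)) ∂ℙ = f := by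
  have hd' : (1 : ℝ) ≤ d := by exact_mod_cast hd
  have hc' : (2 : ℝ) ≤ c := by exact_mod_cast hc
  have hn' : (0 : ℝ) < n := by exact_mod_cast hn
  set fake : ℝ := ((d : ℝ) - 1) / (d * c)
  have hfake : 0 ≤ fake := div_nonneg (by linarith) (by positivity)
  have hprob : ∀ i, (ℙ : Measure Ω).real {ω | report i ω = true}
      = if holds i then p / d + fake else q / d + fake := by
    intro i
    cases hi : holds i
    · rw [measureReal_def, hqs i hi, if_neg (by simp),
        ENNReal.toReal_ofReal (by have := hq.1; positivity)]
    · rw [measureReal_def, hps i hi, if_pos rfl,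
        ENNReal.toReal_ofReal (by have := hp.1; positivity)]
  have hmean : ∫ ω, (∑ i, if report i ω then (1 : ℝ) else 0) ∂ℙ
      = n * (q / d + fake) + f * n * (p / d - q / d) := by
    rw [integral_sum_ite_one_zero hmeas, Finset.sum_congr rfl fun i _ => hprob i,
      Fintype.sum_ite_eq_card_mul_add, hcount, Fintype.card_fin, add_sub_add_right_eq_sub]
  rw [integral_div, integral_sub (((integrable_sum_ite_one_zero hmeas).mul_const _).mul_const _)
    (integrable_const _), integral_mul_const, integral_mul_const, hmean, integral_const,
    probReal_univ, one_smul]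
  exact rsfd_estimator_of_mean (by positivity) (by positivity) hn'.ne' hpq

/-- Unbiasedness of the RS+FD[GRR] estimator (Theorem `est_grr`). -/
theorem est_grr
    {Ω : Type*} [MeasureSpace Ω] [IsProbabilityMeasure (ℙ : Measure Ω)]
    (d c : ℕ) (hd : 1 ≤ d) (hc : 2 ≤ c)
    (p q : ℝ) (hp : 0 ≤ p ∧ p ≤ 1) (hq : 0 ≤ q ∧ q ≤ 1) (hpq : p ≠ q)
    (hqdef : q = (1 - p) / ((c : ℝ) - 1))
    (n : ℕ) (hn : 0 < n)
    (f : ℝ) (hf0 : 0 ≤ f) (hf1 : f ≤ 1)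
    (holds : Fin n → Bool)
    (hcount : (∑ i, if holds i then (1 : ℝ) else 0) = f * n)
    (report : Fin n → Ω → Bool)
    (hmeas : ∀ i, Measurable (report i))
    (hindep : iIndepFun report ℙ)
    (hps : ∀ i, holds i = true →
      ℙ {ω | report i ω = true}
        = ENNReal.ofReal (p / (d : ℝ) + ((d : ℝ) - 1) / ((d : ℝ) * (c : ℝ))))
    (hqs : ∀ i, holds i = false →
      ℙ {ω | report i ω = true}
        = ENNReal.ofReal (q / (d : ℝ) + ((d : ℝ) - 1) / ((d : ℝ) * (c : ℝ)))) :
    ∫ ω, ((∑ i, if report i ω then (1 : ℝ) else 0) * (d : ℝ) * (c : ℝ)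
        - (n : ℝ) * ((d : ℝ) - 1 + q * (c : ℝ)))
        / ((n : ℝ) * (c : ℝ) * (p - q)) ∂ℙ = f :=
  est_grr_general d c hd hc p q hp hq hpq n hn f holds hcount report hmeas hps hqs
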